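/- arXiv:1703.07238 — 5 statements merged into one kernel-verified Lean document; each statement's English description precedes it below -/
import Mathlib

section
/- The finite symplectic group Sp(2n, F) is generated by: the block-diagonal subgroup H of matrices diag(a, (aᵀ)⁻¹) with a ∈ GL(n,F); the subgroup N₊ of matrices [[1,b],[0,1]] with b = bᵀ; and the partial Fourier elements J_k (the matrix acting as the standard rotation (x_k, y_k) ↦ (−y_k, x_k) in the k-th coordinate pair and identity elsewhere), for k = 1, …, n. -/
open Matrix

section
variable {F : Type*} [Field F] {n : ℕ}

/-- The matrix of the standard symplectic form: `J = [[0,1],[-1,0]]`. -/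
def Jstd (F : Type*) [Field F] (n : ℕ) : Matrix (Fin n ⊕ Fin n) (Fin n ⊕ Fin n) F :=
  Matrix.fromBlocks 0 1 (-1) 0

/-- The partial Fourier element `J_k`: it acts as `(x_k, y_k) ↦ (−y_k, x_k)` on the
`k`-th coordinate pair and as the identity on all other coordinates. -/
def Jel (F : Type*) [Field F] {n : ℕ} (k : Fin n) :
    Matrix (Fin n ⊕ Fin n) (Fin n ⊕ Fin n) F :=
  Matrix.fromBlocks (1 - Matrix.single k k 1) (Matrix.single k k 1)
    (-(Matrix.single k k 1)) (1 - Matrix.single k k 1)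

/-- The block-diagonal subgroup `H`: matrices `diag(a, (aᵀ)⁻¹)` with `a ∈ GL(n,F)`. -/
def genH (F : Type*) [Field F] (n : ℕ) :
    Set (Matrix (Fin n ⊕ Fin n) (Fin n ⊕ Fin n) F) :=
  {g | ∃ a : Matrix (Fin n) (Fin n) F, IsUnit a.det ∧
    g = Matrix.fromBlocks a 0 0 a.transpose⁻¹}

/-- The subgroup `N₊`: matrices `[[1,b],[0,1]]` with `b` symmetric. -/
def genN (F : Type*) [Field F] (n : ℕ) :
    Set (Matrix (Fin n ⊕ Fin n) (Fin n ⊕ Fin n) F) :=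
  {g | ∃ b : Matrix (Fin n) (Fin n) F, b.transpose = b ∧
    g = Matrix.fromBlocks 1 b 0 1}

/-- The set of partial Fourier elements `J_k`, `k = 1, …, n`. -/
def genJ (F : Type*) [Field F] (n : ℕ) :
    Set (Matrix (Fin n ⊕ Fin n) (Fin n ⊕ Fin n) F) :=
  {g | ∃ k : Fin n, g = Jel F k}

end

/-!
A Bruhat-decomposition argument. Multiplying a symplectic `g = [[a, b], [c, d]]` on both sides by
elements of `H` acts on `c` by `c ↦ u c v` with `u, v` invertible, so `c` may be assumed to be the
coordinate projection `e = diag(1_S)`. Then the symplectic relation `aᵀ e = e a` makes `e a`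
symmetric, and `g = N(e a) · W_e · g'` with `W_e = ∏_{k ∈ S} J_k` and `g'` symplectic with zero
lower-left block. Such a `g'` is `diag(a', a'ᵀ⁻¹) · N(a'⁻¹ b')`.
-/

open Matrix SymplecticGroup

lemma Jstd_eq_neg_J (F : Type*) [Field F] (n : ℕ) : Jstd F n = -J (Fin n) F := by
  simp [Jstd, J, fromBlocks_neg]

lemma mem_symplecticGroup_iff_Jstd {F : Type*} [Field F] {n : ℕ}
    {g : Matrix (Fin n ⊕ Fin n) (Fin n ⊕ Fin n) F} :
    g ∈ symplecticGroup (Fin n) F ↔ g * Jstd F n * gᵀ = Jstd F n := by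
  simp [mem_iff, Jstd_eq_neg_J]

namespace Matrix

variable {l R : Type*} [DecidableEq l] [CommRing R]

/-- For `e = diag(1_S)` this is `∏_{k ∈ S} J_k`; in particular
`Jel F k = partialFourier (single k k 1)` by definition. -/
def partialFourier (e : Matrix l l R) : Matrix (l ⊕ l) (l ⊕ l) R :=
  fromBlocks (1 - e) e (-e) (1 - e)

@[simp]
lemma partialFourier_zero : partialFourier (0 : Matrix l l R) = 1 := by
  simp [partialFourier]

variable [Fintype l]

lemma partialFourier_add {e f : Matrix l l R} (h : e * f = 0) :
    partialFourier (e + f) = partialFourier e * partialFourier f := by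
  simp only [partialFourier, fromBlocks_multiply, fromBlocks_inj]
  refine ⟨by noncomm_ring, ?_, ?_, by noncomm_ring⟩
  · linear_combination (norm := noncomm_ring) (2 : ℤ) • h
  · linear_combination (norm := noncomm_ring) (-2 : ℤ) • h

lemma partialFourier_mul_transpose {e : Matrix l l R} (he : IsIdempotentElem e) (het : eᵀ = e) :
    partialFourier e * (partialFourier e)ᵀ = 1 := by
  simp only [partialFourier, fromBlocks_transpose, transpose_sub, transpose_neg, transpose_one,
    het, fromBlocks_multiply, ← fromBlocks_one, fromBlocks_inj]
  refine ⟨?_, by noncomm_ring, by noncomm_ring, ?_⟩ <;>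
    linear_combination (norm := noncomm_ring) (2 : ℤ) • he.eq

lemma toBlocks₂₁_fromBlocks_mul_mul (p q v w : Matrix l l R)
    (g : Matrix (l ⊕ l) (l ⊕ l) R) :
    (fromBlocks p 0 0 q * g * fromBlocks v 0 0 w).toBlocks₂₁ = q * g.toBlocks₂₁ * v := by
  rw [← fromBlocks_toBlocks g]
  simp [fromBlocks_multiply, Matrix.mul_assoc]

lemma fromBlocks_one_mul_fromBlocks_one (b b' : Matrix l l R) :
    (fromBlocks 1 b 0 1 : Matrix (l ⊕ l) (l ⊕ l) R) * fromBlocks 1 b' 0 1 =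
      fromBlocks 1 (b' + b) 0 1 := by
  simp [fromBlocks_multiply]

lemma fromBlocks_transpose_inv_mul (a b : Matrix l l R) :
    fromBlocks a 0 0 aᵀ⁻¹ * fromBlocks b 0 0 bᵀ⁻¹ = fromBlocks (a * b) 0 0 (a * b)ᵀ⁻¹ := by
  simp [fromBlocks_multiply, Matrix.mul_inv_rev]

lemma exists_isUnit_det_mul_mul_eq_diagonal {K : Type*} [Field K] (c : Matrix l l K) :
    ∃ (u v : Matrix l l K) (S : Finset l), IsUnit u.det ∧ IsUnit v.det ∧
      u * c * v = diagonal fun i => if i ∈ S then 1 else 0 := by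
  obtain ⟨u, v, e, hu, hv, huv⟩ := exists_rank_normal_form c
  refine ⟨u, v, Finset.univ.filter fun i => (e i).isLeft, (isUnit_iff_isUnit_det u).1 hu,
    (isUnit_iff_isUnit_det v).1 hv, ?_⟩
  rw [huv, ← diagonal_one, ← diagonal_zero, fromBlocks_diagonal, submatrix_diagonal_equiv]
  congr 1
  funext i
  rcases hi : e i <;> simp [hi]

end Matrix

namespace SymplecticGroup

variable {l R : Type*} [Fintype l] [DecidableEq l] [CommRing R]

lemma fromBlocks_transpose_inv_mem {a : Matrix l l R} (ha : IsUnit a.det) :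
    fromBlocks a 0 0 aᵀ⁻¹ ∈ symplecticGroup l R := by
  rw [fromBlocks_mem_iff]
  simp [mul_nonsing_inv _ ((det_transpose a).symm ▸ ha : IsUnit aᵀ.det)]

lemma fromBlocks_one_zero_one_mem {b : Matrix l l R} (hb : bᵀ = b) :
    fromBlocks 1 b 0 1 ∈ symplecticGroup l R := by
  simp [fromBlocks_mem_iff, hb]

lemma partialFourier_mem {e : Matrix l l R} (he : IsIdempotentElem e) (het : eᵀ = e) :
    partialFourier e ∈ symplecticGroup l R := by
  simp only [partialFourier, fromBlocks_mem_iff, transpose_sub, transpose_neg, transpose_one, het]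
  refine ⟨by noncomm_ring, by noncomm_ring, ?_⟩
  linear_combination (norm := noncomm_ring) (2 : ℤ) • he.eq

lemma exists_eq_fromBlocks_mul_fromBlocks_of_toBlocks₂₁_eq_zero
    {g : Matrix (l ⊕ l) (l ⊕ l) R} (hg : g ∈ symplecticGroup l R) (h : g.toBlocks₂₁ = 0) :
    ∃ a b : Matrix l l R, IsUnit a.det ∧ bᵀ = b ∧
      g = fromBlocks a 0 0 aᵀ⁻¹ * fromBlocks 1 b 0 1 := by
  obtain ⟨a, b, d, rfl⟩ : ∃ a b d, g = fromBlocks a b 0 d :=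
    ⟨_, _, _, by rw [← h, fromBlocks_toBlocks]⟩
  obtain ⟨-, hbd, had⟩ := fromBlocks_mem_iff.1 hg
  rw [transpose_zero, zero_mul, sub_zero] at had
  have ha : IsUnit a.det := by simpa using isUnit_det_of_right_inverse had
  have hd : d = aᵀ⁻¹ := (inv_eq_right_inv had).symm
  refine ⟨a, a⁻¹ * b, ha, ?_, ?_⟩
  · rw [transpose_mul, transpose_nonsing_inv, ← hd, hbd, hd, transpose_nonsing_inv,
      transpose_transpose]
  · rw [fromBlocks_multiply, ← Matrix.mul_assoc, mul_nonsing_inv _ ha, hd]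
    simp

lemma exists_eq_mul_partialFourier_mul {a b e d : Matrix l l R} (he : IsIdempotentElem e)
    (het : eᵀ = e) (hg : fromBlocks a b e d ∈ symplecticGroup l R) :
    ∃ x : Matrix l l R, xᵀ = x ∧ ∃ g ∈ symplecticGroup l R, g.toBlocks₂₁ = 0 ∧
      fromBlocks a b e d = fromBlocks 1 x 0 1 * partialFourier e * g := by
  have hae : aᵀ * e = e * a := by rw [(fromBlocks_mem_iff.1 hg).1, het]
  have hsym : (e * a)ᵀ = e * a := by rw [transpose_mul, het, hae]
  refine ⟨e * a, hsym, (partialFourier e)ᵀ * fromBlocks 1 (-(e * a)) 0 1 * fromBlocks a b e d,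
    mul_mem (mul_mem (transpose_mem (partialFourier_mem he het))
      (fromBlocks_one_zero_one_mem (by rw [transpose_neg, hsym]))) hg, ?_, ?_⟩
  · have heae : e * a * e = e * a := by rw [← hae, Matrix.mul_assoc, he.eq]
    simp only [partialFourier, fromBlocks_transpose, transpose_sub, transpose_neg, transpose_one,
      het, fromBlocks_multiply, toBlocks_fromBlocks₂₁]
    linear_combination (norm := noncomm_ring) -heae - he.eq * (a * e) - he.eq
  · simp only [← Matrix.mul_assoc]
    rw [Matrix.mul_assoc _ (partialFourier e), partialFourier_mul_transpose he het, Matrix.mul_one,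
      fromBlocks_one_mul_fromBlocks_one]
    simp

end SymplecticGroup

section Generation

variable {F : Type*} [Field F] {n : ℕ}

lemma closure_le_symplecticGroup :
    Submonoid.closure (genH F n ∪ genN F n ∪ genJ F n) ≤ symplecticGroup (Fin n) F := by
  rw [Submonoid.closure_le]
  rintro _ ((⟨a, ha, rfl⟩ | ⟨b, hb, rfl⟩) | ⟨k, rfl⟩)
  · exact fromBlocks_transpose_inv_mem ha
  · exact fromBlocks_one_zero_one_mem hb
  · exact partialFourier_mem (by simp [IsIdempotentElem]) (transpose_single _ _ _)

lemma fromBlocks_transpose_inv_mem_closure {a : Matrix (Fin n) (Fin n) F} (ha : IsUnit a.det) :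
    fromBlocks a 0 0 aᵀ⁻¹ ∈ Submonoid.closure (genH F n ∪ genN F n ∪ genJ F n) :=
  Submonoid.subset_closure (Or.inl (Or.inl ⟨a, ha, rfl⟩))

lemma fromBlocks_one_zero_one_mem_closure {b : Matrix (Fin n) (Fin n) F} (hb : bᵀ = b) :
    fromBlocks 1 b 0 1 ∈ Submonoid.closure (genH F n ∪ genN F n ∪ genJ F n) :=
  Submonoid.subset_closure (Or.inl (Or.inr ⟨b, hb, rfl⟩))

lemma partialFourier_diagonal_mem_closure (S : Finset (Fin n)) :
    partialFourier (diagonal fun i => if i ∈ S then (1 : F) else 0) ∈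
      Submonoid.closure (genH F n ∪ genN F n ∪ genJ F n) := by
  induction S using Finset.induction_on with
  | empty => simp [one_mem]
  | @insert k S hk ih =>
    have hsplit : (diagonal fun i => if i ∈ insert k S then (1 : F) else 0) =
        single k k 1 + diagonal fun i => if i ∈ S then 1 else 0 := by
      rw [← diagonal_single, diagonal_add]
      congr 1
      funext i
      by_cases hi : i = k <;> simp [hi, hk]
    have horth : single k k (1 : F) * (diagonal fun i => if i ∈ S then 1 else 0) = 0 := by
      rw [← diagonal_single, diagonal_mul_diagonal, ← diagonal_zero]
      congr 1
      funext i
      by_cases hi : i = k <;> simp [hi, hk]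
    rw [hsplit, partialFourier_add horth]
    exact mul_mem (Submonoid.subset_closure (Or.inr ⟨k, rfl⟩)) ih

lemma mem_closure_of_toBlocks₂₁_eq_zero {g : Matrix (Fin n ⊕ Fin n) (Fin n ⊕ Fin n) F}
    (hg : g ∈ symplecticGroup (Fin n) F) (h : g.toBlocks₂₁ = 0) :
    g ∈ Submonoid.closure (genH F n ∪ genN F n ∪ genJ F n) := by
  obtain ⟨a, b, ha, hb, rfl⟩ := exists_eq_fromBlocks_mul_fromBlocks_of_toBlocks₂₁_eq_zero hg h
  exact mul_mem (fromBlocks_transpose_inv_mem_closure ha) (fromBlocks_one_zero_one_mem_closure hb)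

lemma mem_closure_of_toBlocks₂₁_eq_diagonal {g : Matrix (Fin n ⊕ Fin n) (Fin n ⊕ Fin n) F}
    (hg : g ∈ symplecticGroup (Fin n) F) {S : Finset (Fin n)}
    (h : g.toBlocks₂₁ = diagonal fun i => if i ∈ S then 1 else 0) :
    g ∈ Submonoid.closure (genH F n ∪ genN F n ∪ genJ F n) := by
  set e : Matrix (Fin n) (Fin n) F := diagonal fun i => if i ∈ S then 1 else 0
  have he : IsIdempotentElem e := by
    rw [IsIdempotentElem, diagonal_mul_diagonal]
    congr 1
    funext i
    split_ifs <;> simp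
  rw [← fromBlocks_toBlocks g, h] at hg ⊢
  obtain ⟨x, hx, g', hg', hg'₂₁, heq⟩ :=
    exists_eq_mul_partialFourier_mul he (diagonal_transpose _) hg
  rw [heq]
  exact mul_mem (mul_mem (fromBlocks_one_zero_one_mem_closure hx)
    (partialFourier_diagonal_mem_closure S)) (mem_closure_of_toBlocks₂₁_eq_zero hg' hg'₂₁)

lemma symplecticGroup_le_closure :
    symplecticGroup (Fin n) F ≤ Submonoid.closure (genH F n ∪ genN F n ∪ genJ F n) := by
  intro g hg
  obtain ⟨u, v, S, hu, hv, huv⟩ := exists_isUnit_det_mul_mul_eq_diagonal g.toBlocks₂₁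
  set p := uᵀ⁻¹
  have hp : IsUnit p.det := isUnit_nonsing_inv_det _ (by rwa [det_transpose])
  have hpu : pᵀ⁻¹ = u := by
    rw [transpose_nonsing_inv, transpose_transpose, nonsing_inv_nonsing_inv _ hu]
  have hreduced : fromBlocks p 0 0 pᵀ⁻¹ * g * fromBlocks v 0 0 vᵀ⁻¹ ∈
      Submonoid.closure (genH F n ∪ genN F n ∪ genJ F n) :=
    mem_closure_of_toBlocks₂₁_eq_diagonal
      (mul_mem (mul_mem (fromBlocks_transpose_inv_mem hp) hg) (fromBlocks_transpose_inv_mem hv))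
      (by rw [toBlocks₂₁_fromBlocks_mul_mul, hpu, huv])
  have hg_eq : g = fromBlocks p⁻¹ 0 0 p⁻¹ᵀ⁻¹ *
      (fromBlocks p 0 0 pᵀ⁻¹ * g * fromBlocks v 0 0 vᵀ⁻¹) * fromBlocks v⁻¹ 0 0 v⁻¹ᵀ⁻¹ := by
    simp only [← Matrix.mul_assoc, fromBlocks_transpose_inv_mul, nonsing_inv_mul _ hp]
    rw [Matrix.mul_assoc, fromBlocks_transpose_inv_mul, mul_nonsing_inv _ hv]
    simp
  rw [hg_eq]
  exact mul_mem (mul_mem (fromBlocks_transpose_inv_mem_closure (isUnit_nonsing_inv_det _ hp))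
    hreduced) (fromBlocks_transpose_inv_mem_closure (isUnit_nonsing_inv_det _ hv))

end Generation

/-- the symplectic group `Sp(2n,F)` (matrices with `g J gᵀ = J`)
is generated by the subgroup `H`, the subgroup `N₊`, and the elements `J_k`. -/
theorem sp_generated {F : Type*} [Field F] (n : ℕ) :
    {g : Matrix (Fin n ⊕ Fin n) (Fin n ⊕ Fin n) F |
        g * Jstd F n * g.transpose = Jstd F n}
      = (Submonoid.closure (genH F n ∪ genN F n ∪ genJ F n) :
          Set (Matrix (Fin n ⊕ Fin n) (Fin n ⊕ Fin n) F)) := by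
  have hSp : {g | g * Jstd F n * gᵀ = Jstd F n} = (symplecticGroup (Fin n) F : Set _) :=
    Set.ext fun _ => mem_symplecticGroup_iff_Jstd.symm
  rw [hSp, le_antisymm symplecticGroup_le_closure closure_le_symplecticGroup]
end

section
/- Let X be a finite-dimensional vector space over a finite field F of odd characteristic, P a quadratic form on X, and Exp a nontrivial additive character of F. Define f(u) = Σ_{x ∈ X} Exp(P(x) + ⟨u, x⟩) for u in the dual space U = X*. Then there exist a subspace K ⊆ U, a nonzero constant c ∈ ℂ, and a quadratic form S on U such that f(u) = c · Exp(S(u)) for u ∈ K and f(u) = 0 for u ∉ K. -/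
/-!
Write `B : X → U` for the polar form of `P` and `f` for the Gauss sum. The substitution
`x ↦ x + y` gives `f (u + B y) = Exp (-(P y + u y)) * f u`. With `u = 0` this shows that on the
range of `B` the function `f` is `f 0 * Exp (-P (s u))` for any linear section `s` of `B`; summing
the same identity over `y` and using orthogonality of characters gives
`f 0 * ∑ y, Exp (-P y) = |ker B| * |X|`, so `f 0 ≠ 0`. The range of `B` is the annihilator of
`ker B`, and `P` vanishes on `ker B` because `2 ≠ 0`; so for `u` off the range some `t ∈ ker B`
has `Exp (u t) ≠ 1`, and translating by `t` gives `f u = Exp (u t) * f u`, i.e. `f u = 0`.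
-/

open Finset LinearMap

theorem AddChar.exists_apply_mul_ne_one {F M : Type*} [Field F] [Monoid M] {ψ : AddChar F M}
    (hψ : ψ ≠ 1) {a : F} (ha : a ≠ 0) : ∃ c, ψ (c * a) ≠ 1 := by
  obtain ⟨b, hb⟩ := AddChar.ne_one_iff.1 hψ
  exact ⟨b / a, by rwa [div_mul_cancel₀ _ ha]⟩

theorem AddChar.sum_apply_dual_eq_zero {F X R : Type*} [Field F] [AddCommGroup X] [Module F X]
    [Fintype X] [CommRing R] [IsDomain R] {ψ : AddChar F R} (hψ : ψ ≠ 1)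
    {φ : Module.Dual F X} (hφ : φ ≠ 0) : ∑ x, ψ (φ x) = 0 := by
  obtain ⟨x₀, hx₀⟩ : ∃ x, φ x ≠ 0 := by
    by_contra! h
    exact hφ (LinearMap.ext h)
  obtain ⟨c, hc⟩ := exists_apply_mul_ne_one hψ hx₀
  refine AddChar.sum_eq_zero_of_ne_one (ψ := ψ.compAddMonoidHom φ.toAddMonoidHom)
    (AddChar.ne_one_iff.2 ⟨c • x₀, ?_⟩)
  simpa using hc

theorem LinearMap.exists_forall_mem_range_apply_eq {K V W : Type*} [DivisionRing K]
    [AddCommGroup V] [Module K V] [AddCommGroup W] [Module K W] (f : V →ₗ[K] W) :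
    ∃ s : W →ₗ[K] V, ∀ w ∈ range f, f (s w) = w := by
  obtain ⟨σ, hσ⟩ := f.rangeRestrict.exists_rightInverse_of_surjective f.range_rangeRestrict
  obtain ⟨s, hs⟩ := LinearMap.exists_extend σ
  refine ⟨s, fun w hw => ?_⟩
  have := congr(((range f).subtype ∘ₗ $hσ) ⟨w, hw⟩)
  rw [← hs] at this
  simpa using this

namespace QuadraticMap

variable {R M N : Type*} [CommRing R] [AddCommGroup M] [Module R M] [AddCommGroup N] [Module R N]

theorem flip_polarBilin (Q : QuadraticMap R M N) : Q.polarBilin.flip = Q.polarBilin :=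
  LinearMap.ext₂ fun x y => polar_comm Q y x

theorem apply_eq_zero_of_polarBilin_eq_zero [NoZeroDivisors R] (h2 : (2 : R) ≠ 0)
    (Q : QuadraticForm R M) {z : M} (hz : Q.polarBilin z = 0) : Q z = 0 := by
  have hpolar : polar Q z z = 0 := by simpa using congr($hz z)
  rw [polar_self, nsmul_eq_mul, Nat.cast_ofNat] at hpolar
  exact (mul_eq_zero.1 hpolar).resolve_left h2

end QuadraticMap

section GaussSum

variable {F X R : Type*} [AddCommGroup X] [Fintype X] [CommRing R]

def quadraticGaussSum [CommRing F] [Module F X] (ψ : AddChar F R) (P : QuadraticForm F X)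
    (u : Module.Dual F X) : R :=
  ∑ x, ψ (P x + u x)

section CommRing

variable [CommRing F] [Module F X] (ψ : AddChar F R) (P : QuadraticForm F X)

theorem quadraticGaussSum_add_polarBilin (u : Module.Dual F X) (y : X) :
    quadraticGaussSum ψ P (u + P.polarBilin y) = ψ (-(P y + u y)) * quadraticGaussSum ψ P u := by
  rw [quadraticGaussSum, quadraticGaussSum, mul_sum]
  refine Fintype.sum_equiv (Equiv.addRight y) _ _ fun x => ?_
  rw [← AddChar.map_add_eq_mul]
  congr 1
  rw [Equiv.coe_addRight, QuadraticMap.map_add (⇑P) x y, map_add, LinearMap.add_apply,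
    QuadraticMap.polarBilin_apply_apply, QuadraticMap.polar_comm P x y]
  ring

theorem quadraticGaussSum_polarBilin (y : X) :
    quadraticGaussSum ψ P (P.polarBilin y) = ψ (-P y) * quadraticGaussSum ψ P 0 := by
  have := quadraticGaussSum_add_polarBilin ψ P 0 y
  rwa [zero_add, LinearMap.zero_apply, add_zero] at this

end CommRing

section Field

variable [Field F] [Module F X] [IsDomain R] (ψ : AddChar F R) (P : QuadraticForm F X)

theorem sum_quadraticGaussSum_polarBilin (h2 : (2 : F) ≠ 0) (hψ : ψ ≠ 1) :
    ∑ y, quadraticGaussSum ψ P (P.polarBilin y) =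
      Nat.card (ker P.polarBilin) * Fintype.card X := by
  classical
  have inner (x : X) : ∑ y, ψ (P x + P.polarBilin y x) =
      if P.polarBilin x = 0 then (Fintype.card X : R) else 0 := by
    have hsymm (y : X) : P.polarBilin y x = P.polarBilin x y := QuadraticMap.polar_comm P y x
    simp only [hsymm]
    split_ifs with hx
    · simp [hx, P.apply_eq_zero_of_polarBilin_eq_zero h2 hx]
    · simp only [AddChar.map_add_eq_mul, ← mul_sum, AddChar.sum_apply_dual_eq_zero hψ hx,
        mul_zero]
  simp only [quadraticGaussSum, sum_comm (γ := X), inner, sum_ite, sum_const_zero, add_zero,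
    sum_const, nsmul_eq_mul, Nat.card_eq_fintype_card, Fintype.card_subtype, mem_ker]

theorem quadraticGaussSum_zero_ne_zero [CharZero R] (h2 : (2 : F) ≠ 0) (hψ : ψ ≠ 1) :
    quadraticGaussSum ψ P 0 ≠ 0 := by
  intro h
  have hsum := sum_quadraticGaussSum_polarBilin ψ P h2 hψ
  simp only [quadraticGaussSum_polarBilin, h, mul_zero, sum_const_zero] at hsum
  have : Nat.card (ker P.polarBilin) * Fintype.card X ≠ 0 :=
    mul_ne_zero Nat.card_pos.ne' Fintype.card_ne_zero
  exact this (by exact_mod_cast hsum.symm)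

theorem quadraticGaussSum_eq_zero_of_polarBilin_eq_zero (h2 : (2 : F) ≠ 0) {u : Module.Dual F X}
    {t : X} (ht : P.polarBilin t = 0) (hut : ψ (u t) ≠ 1) : quadraticGaussSum ψ P u = 0 := by
  have hP : P t = 0 := P.apply_eq_zero_of_polarBilin_eq_zero h2 ht
  have hshift := quadraticGaussSum_add_polarBilin ψ P u (-t)
  simp only [map_neg, ht, neg_zero, add_zero, QuadraticMap.map_neg, hP, zero_add, neg_neg]
    at hshift
  exact eq_zero_of_mul_eq_self_left hut hshift.symm

theorem quadraticGaussSum_eq_zero_of_notMem_range [FiniteDimensional F X] (h2 : (2 : F) ≠ 0)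
    (hψ : ψ ≠ 1) {u : Module.Dual F X} (hu : u ∉ range P.polarBilin) :
    quadraticGaussSum ψ P u = 0 := by
  rw [← P.flip_polarBilin, ← dualAnnihilator_ker_eq_range_flip,
    Submodule.mem_dualAnnihilator] at hu
  push Not at hu
  obtain ⟨r, hr, hur⟩ := hu
  obtain ⟨c, hc⟩ := AddChar.exists_apply_mul_ne_one hψ hur
  exact quadraticGaussSum_eq_zero_of_polarBilin_eq_zero ψ P h2 (t := c • r)
    (by rw [map_smul, mem_ker.1 hr, smul_zero]) (by rwa [map_smul, smul_eq_mul])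

end Field

end GaussSum

theorem gauss_sum_dual_general {F : Type*} [Field F] (hp : ringChar F ≠ 2)
    (Exp : AddChar F ℂ) (hExp : Exp ≠ 1)
    {X : Type*} [AddCommGroup X] [Module F X] [Fintype X]
    (P : QuadraticForm F X) :
    ∃ (K : Submodule F (Module.Dual F X)) (c : ℂ) (_ : c ≠ 0)
      (S : QuadraticForm F (Module.Dual F X)),
      ∀ u : Module.Dual F X,
        (u ∈ K → ∑ x : X, Exp (P x + u x) = c * Exp (S u)) ∧
        (u ∉ K → ∑ x : X, Exp (P x + u x) = 0) := by
  have h2 : (2 : F) ≠ 0 := Ring.two_ne_zero hp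
  obtain ⟨s, hs⟩ := P.polarBilin.exists_forall_mem_range_apply_eq
  refine ⟨range P.polarBilin, quadraticGaussSum Exp P 0,
    quadraticGaussSum_zero_ne_zero Exp P h2 hExp, -(P.comp s),
    fun u => ⟨fun hu => ?_, quadraticGaussSum_eq_zero_of_notMem_range Exp P h2 hExp⟩⟩
  change quadraticGaussSum Exp P u = _
  rw [← hs u hu, quadraticGaussSum_polarBilin, mul_comm, hs u hu]
  rfl

/-- for a quadratic form `P` on a finite-dimensional vector space `X`
over a finite field of odd characteristic and a nontrivial additive character `Exp`,
the Gauss sum `f(u) = Σ_x Exp(P(x) + ⟨u,x⟩)` on the dual space `U = X*` is, for a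
suitable subspace `K ⊆ U`, a nonzero constant `c` and a quadratic form `S` on `U`,
equal to `c·Exp(S(u))` on `K` and to `0` off `K`. -/
theorem gauss_sum_dual {F : Type*} [Field F] [Fintype F] (hp : ringChar F ≠ 2)
    (Exp : AddChar F ℂ) (hExp : Exp ≠ 1)
    {X : Type*} [AddCommGroup X] [Module F X] [FiniteDimensional F X] [Fintype X]
    (P : QuadraticForm F X) :
    ∃ (K : Submodule F (Module.Dual F X)) (c : ℂ) (_ : c ≠ 0)
      (S : QuadraticForm F (Module.Dual F X)),
      ∀ u : Module.Dual F X,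
        (u ∈ K → ∑ x : X, Exp (P x + u x) = c * Exp (S u)) ∧
        (u ∉ K → ∑ x : X, Exp (P x + u x) = 0) :=
  gauss_sum_dual_general hp Exp hExp P
end

section
/- Let X be a finite-dimensional F-vector space and Y an F-vector space (finite-dimensional), F a finite field of odd characteristic, Q a quadratic form on X × Y, and Exp a nontrivial additive character of F. Then F(y) := Σ_{x ∈ X} Exp(Q(x,y)) satisfies: there exist a linear subspace Z ⊆ Y of codimension at most dim X, a nonzero constant c ∈ ℂ, and a quadratic form R on Y such that F(y) = c·Exp(R(y)) for y ∈ Z and F(y) = 0 for y ∉ Z. -/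
/-!
Write `Q (x, y) = q x + ℓ y x + Q (0, y)`, where `q = Q (·, 0)` has polar form `b` and
`ℓ y x = polar Q (x, 0) (0, y)`. Let `Z` be the set of `y` for which `ℓ y` lies in the range of
`b`; its codimension is at most `dim (Dual X) = dim X`. For `y ∈ Z` choose `x₀ y`, linearly in `y`,
with `ℓ y = b (·, x₀ y)`: translating `x` by `x₀ y` completes the square, giving
`∑ₓ Exp (Q (x, y)) = (∑ₓ Exp (q x)) · Exp (Q (-x₀ y, y))`. The Gauss sum `∑ₓ Exp (q x)` is nonzero,
since its product with `∑ₓ Exp (-q x)` equals `|X| · |rad b|`. For `y ∉ Z`, the range of `b` is the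
annihilator of its radical, so `ℓ y h ≠ 0` for some `h ∈ rad b`; as `q` vanishes on `rad b`,
translating `x` along `h` multiplies the sum by a nontrivial character value, so it vanishes.
-/

open Module QuadraticMap

theorem QuadraticMap.apply_eq_zero_of_polar_self_eq_zero {F X : Type*} [Field F] [AddCommGroup X]
    [Module F X] (q : QuadraticForm F X) (h2 : (2 : F) ≠ 0) {h : X} (hh : polar q h h = 0) :
    q h = 0 := by
  rw [polar_self, nsmul_eq_mul, Nat.cast_ofNat] at hh
  exact (mul_eq_zero.mp hh).resolve_left h2

section AddCharSum

variable {F X : Type*} [Field F] [AddCommGroup X] [Module F X] [Fintype X]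
  {ψ : AddChar F ℂ}

theorem sum_addChar_eq_zero_of_map_add_smul (hψ : ψ ≠ 1) {g : X → F} {h : X} {a : F}
    (ha : a ≠ 0) (hg : ∀ x (t : F), g (x + t • h) = g x + t * a) :
    ∑ x, ψ (g x) = 0 := by
  obtain ⟨b, hb⟩ := AddChar.ne_one_iff.mp hψ
  have hshift : ∑ x, ψ (g x) = ψ b * ∑ x, ψ (g x) := calc
    ∑ x, ψ (g x) = ∑ x, ψ (g (x + (b / a) • h)) :=
      (Equiv.sum_comp (Equiv.addRight _) (fun x ↦ ψ (g x))).symm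
    _ = ψ b * ∑ x, ψ (g x) := by
      simp only [hg, div_mul_cancel₀ _ ha, AddChar.map_add_eq_mul, Finset.mul_sum, mul_comm]
  have : (1 - ψ b) * ∑ x, ψ (g x) = 0 := by linear_combination hshift
  exact (mul_eq_zero.mp this).resolve_left (sub_ne_zero.mpr (Ne.symm hb))

theorem sum_addChar_dual_eq_zero (hψ : ψ ≠ 1) {f : Dual F X} (hf : f ≠ 0) :
    ∑ x, ψ (f x) = 0 := by
  obtain ⟨h, hh⟩ : ∃ h, f h ≠ 0 := by
    by_contra! H
    exact hf (LinearMap.ext H)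
  exact sum_addChar_eq_zero_of_map_add_smul hψ hh fun x t ↦ by rw [map_add, map_smul, smul_eq_mul]

theorem sum_addChar_quadraticForm_ne_zero (hψ : ψ ≠ 1) (h2 : (2 : F) ≠ 0)
    (q : QuadraticForm F X) : ∑ x, ψ (q x) ≠ 0 := by
  classical
  have hterm : ∀ h, ψ (q h) * ∑ x, ψ (polar q x h) =
      if ∀ x, polar q x h = 0 then (Fintype.card X : ℂ) else 0 := by
    intro h
    split_ifs with hrad
    · simp [hrad, q.apply_eq_zero_of_polar_self_eq_zero h2 (hrad h)]
    · push Not at hrad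
      have : (polarBilin q).flip h ≠ 0 := fun h0 ↦ by
        obtain ⟨x, hx⟩ := hrad
        exact hx (LinearMap.congr_fun h0 x)
      have hsum := sum_addChar_dual_eq_zero hψ this
      simp only [LinearMap.flip_apply, polarBilin_apply_apply] at hsum
      rw [hsum, mul_zero]
  have key : (∑ x, ψ (q x)) * ∑ x, ψ (-q x) =
      ((Finset.univ.filter fun h ↦ ∀ x, polar q x h = 0).card * Fintype.card X : ℕ) := calc
    (∑ x, ψ (q x)) * ∑ x, ψ (-q x) = ∑ x', ∑ x, ψ (q x - q x') := by
      rw [Finset.sum_mul_sum, Finset.sum_comm]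
      simp only [sub_eq_add_neg, AddChar.map_add_eq_mul]
    _ = ∑ x', ∑ h, ψ (q (x' + h) - q x') := by
      congr! 1 with x'
      exact (Equiv.sum_comp (Equiv.addLeft x') (fun x ↦ ψ (q x - q x'))).symm
    _ = ∑ h, ψ (q h) * ∑ x, ψ (polar q x h) := by
      have hsq : ∀ x h, q (x + h) - q x = q h + polar q x h := fun x h ↦ by
        simp only [polar]; ring
      rw [Finset.sum_comm]
      simp only [hsq, AddChar.map_add_eq_mul, Finset.mul_sum]
    _ = _ := by
      simp only [hterm, Finset.sum_ite, Finset.sum_const_zero, add_zero, Finset.sum_const,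
        nsmul_eq_mul]
      push_cast; rfl
  intro h0
  rw [h0, zero_mul, eq_comm, Nat.cast_eq_zero, mul_eq_zero, Finset.card_eq_zero,
    Fintype.card_eq_zero_iff] at key
  rcases key with hempty | hX
  · exact Finset.eq_empty_iff_forall_notMem.mp hempty 0 (by simp)
  · exact hX.false 0

end AddCharSum

section QuadraticSum

variable {F X V : Type*} [Field F] [AddCommGroup X] [Module F X] [Fintype X]
  [AddCommGroup V] [Module F V] {ψ : AddChar F ℂ} (Q : QuadraticForm F V) (i : X →ₗ[F] V)

theorem sum_addChar_map_add_of_polar_eq_zero {v : V} (hv : ∀ x, polar Q (i x) v = 0) :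
    ∑ x, ψ (Q (i x + v)) = (∑ x, ψ (Q (i x))) * ψ (Q v) := by
  simp only [QuadraticMap.map_add Q, hv, add_zero, AddChar.map_add_eq_mul, Finset.sum_mul]

theorem sum_addChar_map_add_eq_zero_of_polar_ne_zero (hψ : ψ ≠ 1) (h2 : (2 : F) ≠ 0)
    {h : X} (hh : ∀ x, polar Q (i x) (i h) = 0) {v : V} (hv : polar Q (i h) v ≠ 0) :
    ∑ x, ψ (Q (i x + v)) = 0 := by
  have hQh : Q (i h) = 0 := Q.apply_eq_zero_of_polar_self_eq_zero h2 (hh h)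
  refine sum_addChar_eq_zero_of_map_add_smul (h := h) hψ hv fun x t ↦ ?_
  rw [i.map_add, i.map_smul, add_right_comm, QuadraticMap.map_add Q, Q.map_smul, hQh,
    polar_smul_right, polar_add_left, hh, polar_comm Q v]
  simp

end QuadraticSum

theorem Submodule.finrank_quotient_comap_le {K V W : Type*} [Field K] [AddCommGroup V]
    [Module K V] [AddCommGroup W] [Module K W] [FiniteDimensional K W] (f : V →ₗ[K] W)
    (p : Submodule K W) : finrank K (V ⧸ p.comap f) ≤ finrank K (W ⧸ p) := by
  have hker : LinearMap.ker (p.mkQ ∘ₗ f) = p.comap f := by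
    rw [LinearMap.ker_comp, Submodule.ker_mkQ]
  rw [← hker, (p.mkQ ∘ₗ f).quotKerEquivRange.finrank_eq]
  exact Submodule.finrank_le _

theorem LinearMap.exists_rightInvOn_range {K V W : Type*} [DivisionRing K] [AddCommGroup V]
    [Module K V] [AddCommGroup W] [Module K W] (g : V →ₗ[K] W) :
    ∃ s : W →ₗ[K] V, Set.RightInvOn s g (range g) := by
  obtain ⟨s₀, hs₀⟩ := g.rangeRestrict.exists_rightInverse_of_surjective g.range_rangeRestrict
  obtain ⟨s, hs⟩ := LinearMap.exists_extend s₀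
  exact ⟨s, fun w hw ↦ by simpa [← hs] using congr(($hs₀ ⟨w, hw⟩ : W))⟩

theorem gauss_partial_sum_general {F : Type*} [Field F] (hp : ringChar F ≠ 2)
    (Exp : AddChar F ℂ) (hExp : Exp ≠ 1)
    {X Y : Type*} [AddCommGroup X] [Module F X] [Fintype X]
    [AddCommGroup Y] [Module F Y]
    (Q : QuadraticForm F (X × Y)) :
    ∃ (Z : Submodule F Y) (c : ℂ) (_ : c ≠ 0) (R : QuadraticForm F Y),
      Module.finrank F (Y ⧸ Z) ≤ Module.finrank F X ∧
      ∀ y : Y,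
        (y ∈ Z → ∑ x : X, Exp (Q (x, y)) = c * Exp (R y)) ∧
        (y ∉ Z → ∑ x : X, Exp (Q (x, y)) = 0) := by
  have h2 : (2 : F) ≠ 0 := Ring.two_ne_zero hp
  set i := LinearMap.inl F X Y
  set j := LinearMap.inr F X Y
  set B : LinearMap.BilinForm F X := Q.polarBilin.compl₁₂ i i
  set ℓ : Y →ₗ[F] Dual F X := (Q.polarBilin.compl₁₂ i j).flip
  obtain ⟨s, hs⟩ := B.flip.exists_rightInvOn_range
  set x₀ := s ∘ₗ ℓ
  refine ⟨(LinearMap.range B.flip).comap ℓ, ∑ x, Exp (Q (x, 0)),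
    sum_addChar_quadraticForm_ne_zero hExp h2 (Q.comp i),
    Q.comp (j - i ∘ₗ x₀), ?_, fun y ↦ ⟨fun hy ↦ ?_, fun hy ↦ ?_⟩⟩
  · calc finrank F (Y ⧸ (LinearMap.range B.flip).comap ℓ)
        ≤ finrank F (Dual F X ⧸ LinearMap.range B.flip) := Submodule.finrank_quotient_comap_le ℓ _
      _ ≤ finrank F (Dual F X) := Submodule.finrank_quotient_le _
      _ = finrank F X := Subspace.dual_finrank_eq
  · have hv : ∀ x, polar Q (i x) (j y - i (x₀ y)) = 0 := fun x ↦ by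
      have hx₀ : polar Q (i x) (i (x₀ y)) = polar Q (i x) (j y) :=
        congr($(hs (x := ℓ y) hy) x)
      rw [polar_sub_right, hx₀, sub_self]
    calc ∑ x, Exp (Q (x, y)) = ∑ x, Exp (Q (i x + (j y - i (x₀ y)))) := by
          rw [← Equiv.sum_comp (Equiv.subRight (x₀ y))]
          simp [i, j, sub_eq_add_neg]
      _ = _ := sum_addChar_map_add_of_polar_eq_zero Q i hv
  · have hℓ : ℓ y ∉ (LinearMap.ker B).dualAnnihilator := by
      rwa [LinearMap.dualAnnihilator_ker_eq_range_flip]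
    obtain ⟨h, hh, hℓh⟩ : ∃ h ∈ LinearMap.ker B, ℓ y h ≠ 0 := by
      simpa only [Submodule.mem_dualAnnihilator, not_forall, exists_prop] using hℓ
    calc ∑ x, Exp (Q (x, y)) = ∑ x, Exp (Q (i x + j y)) := by simp [i, j]
      _ = 0 := sum_addChar_map_add_eq_zero_of_polar_ne_zero Q i hExp h2
          (fun x ↦ (polar_comm Q _ _).trans congr($hh x)) hℓh

/-- for a quadratic form `Q` on `X × Y` (with `X`, `Y`
finite-dimensional over a finite field of odd characteristic) and a nontrivial
additive character `Exp`, the partial Gauss sum `F(y) = Σ_{x ∈ X} Exp(Q(x,y))`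
equals `c·Exp(R(y))` on a subspace `Z ⊆ Y` of codimension at most `dim X`, and
vanishes off `Z`, for a suitable nonzero constant `c` and quadratic form `R` on `Y`. -/
theorem gauss_partial_sum {F : Type*} [Field F] [Fintype F] (hp : ringChar F ≠ 2)
    (Exp : AddChar F ℂ) (hExp : Exp ≠ 1)
    {X Y : Type*} [AddCommGroup X] [Module F X] [FiniteDimensional F X] [Fintype X]
    [AddCommGroup Y] [Module F Y] [FiniteDimensional F Y]
    (Q : QuadraticForm F (X × Y)) :
    ∃ (Z : Submodule F Y) (c : ℂ) (_ : c ≠ 0) (R : QuadraticForm F Y),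
      Module.finrank F (Y ⧸ Z) ≤ Module.finrank F X ∧
      ∀ y : Y,
        (y ∈ Z → ∑ x : X, Exp (Q (x, y)) = c * Exp (R y)) ∧
        (y ∉ Z → ∑ x : X, Exp (Q (x, y)) = 0) :=
  gauss_partial_sum_general hp Exp hExp Q
end

section
/- Let X and Y be coisotropic subspaces of a finite-dimensional symplectic space (V, ω). In the symplectic quotient X/X^⊥, let K be the image of X ∩ Y and L the image of X ∩ Y^⊥ (both are subspaces of X containing their intersection with X^⊥). Then L is the orthogonal complement of K in X/X^⊥ with respect to the induced symplectic form. -/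
/-- Orthogonal complement of a subspace with respect to a bilinear form. -/
def sympOrth {F : Type*} [Field F] {V : Type*} [AddCommGroup V] [Module F V]
    (ω : V →ₗ[F] V →ₗ[F] F) (W : Submodule F V) : Submodule F V where
  carrier := {v | ∀ w ∈ W, ω v w = 0}
  zero_mem' := by intro w hw; simp
  add_mem' := by
    intro a b ha hb w hw
    simp [map_add, LinearMap.add_apply, ha w hw, hb w hw]
  smul_mem' := by
    intro c a ha w hw
    simp [map_smul, LinearMap.smul_apply, ha w hw]

/-!
The induced form on `X/X^⊥` is computed on representatives, and `X^⊥` pairs to zero with `X`, so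
the orthogonal of `K` in the quotient is the image of `X ∩ (X ∩ Y)^⊥`. Nondegeneracy in finite
dimension makes `^⊥` an involution, hence `(X ∩ Y)^⊥ = X^⊥ + Y^⊥`, and since `X^⊥ ⊆ X` the modular
law gives `X ∩ (X^⊥ + Y^⊥) = X^⊥ + (X ∩ Y^⊥)`, whose image is `L`.
-/

section

variable {F V : Type*} [Field F] [AddCommGroup V] [Module F V] {ω : V →ₗ[F] V →ₗ[F] F}

theorem sympOrth_eq_orthogonal (hω : ω.IsRefl) (W : Submodule F V) :
    sympOrth ω W = LinearMap.BilinForm.orthogonal ω W := by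
  ext v
  exact ⟨fun h w hw => hω _ _ (h w hw), fun h w hw => hω _ _ (h w hw)⟩

theorem sympOrth_sup (A B : Submodule F V) :
    sympOrth ω (A ⊔ B) = sympOrth ω A ⊓ sympOrth ω B := by
  ext v
  constructor
  · intro h
    exact ⟨fun a ha => h a (Submodule.mem_sup_left ha),
      fun b hb => h b (Submodule.mem_sup_right hb)⟩
  · rintro ⟨hA, hB⟩ w hw
    obtain ⟨a, ha, b, hb, rfl⟩ := Submodule.mem_sup.1 hw
    rw [map_add, hA a ha, hB b hb, add_zero]

theorem sympOrth_sympOrth [FiniteDimensional F V] (hω : ω.IsRefl) (hnd : ω.SeparatingLeft)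
    (W : Submodule F V) : sympOrth ω (sympOrth ω W) = W := by
  simp only [sympOrth_eq_orthogonal hω]
  exact LinearMap.BilinForm.orthogonal_orthogonal
    (hω.nondegenerate_iff_separatingLeft.2 hnd) hω W

theorem sympOrth_inf [FiniteDimensional F V] (hω : ω.IsRefl) (hnd : ω.SeparatingLeft)
    (A B : Submodule F V) : sympOrth ω (A ⊓ B) = sympOrth ω A ⊔ sympOrth ω B := by
  conv_lhs => rw [← sympOrth_sympOrth hω hnd A, ← sympOrth_sympOrth hω hnd B, ← sympOrth_sup]
  exact sympOrth_sympOrth hω hnd _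

theorem Submodule.mkQ_mem_map_mkQ_iff {R M : Type*} [Ring R] [AddCommGroup M] [Module R M]
    (p q : Submodule R M) (x : M) : p.mkQ x ∈ q.map p.mkQ ↔ x ∈ p ⊔ q := by
  rw [← Submodule.mem_comap, Submodule.comap_map_mkQ]

theorem mem_comap_subtype_sup_iff {X A S : Submodule F V} (hA : A ≤ X) (v : X) :
    v ∈ A.comap X.subtype ⊔ (X ⊓ S).comap X.subtype ↔ (v : V) ∈ A ⊔ S := by
  have hmap : (A.comap X.subtype ⊔ (X ⊓ S).comap X.subtype).map X.subtype = (A ⊔ S) ⊓ X := by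
    rw [Submodule.map_sup, Submodule.map_comap_subtype, Submodule.map_comap_subtype,
      inf_eq_right.2 hA, ← inf_assoc, inf_idem, inf_comm, sup_inf_assoc_of_le S hA]
  rw [← SetLike.mem_coe, ← X.injective_subtype.mem_set_image, ← Submodule.map_coe,
    SetLike.mem_coe, hmap, Submodule.mem_inf, Submodule.subtype_apply, and_iff_left v.2]

theorem mem_sympOrth_inf_iff_forall_mkQ (hω : ω.IsRefl) (X S : Submodule F V) (v : X) :
    (v : V) ∈ sympOrth ω (X ⊓ S) ↔
      ∀ u : X, Submodule.mkQ ((sympOrth ω X).comap X.subtype) u ∈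
        Submodule.map (Submodule.mkQ ((sympOrth ω X).comap X.subtype))
          ((X ⊓ S).comap X.subtype) → ω (v : V) (u : V) = 0 := by
  constructor
  · rintro hv u ⟨w, hw, hwu⟩
    have hdiff : ω (v : V) ((u : V) - w) = 0 :=
      hω _ _ (((Submodule.Quotient.eq _).1 hwu.symm) v v.2)
    rw [map_sub, sub_eq_zero] at hdiff
    rw [hdiff]
    exact hv w hw
  · intro h w hw
    exact h ⟨w, hw.1⟩ (Submodule.mem_map_of_mem hw)

end

theorem coisotropic_quotient_orth_general {F : Type*} [Field F]
    {V : Type*} [AddCommGroup V] [Module F V] [FiniteDimensional F V]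
    (ω : V →ₗ[F] V →ₗ[F] F)
    (halt : ∀ v, ω v v = 0) (hnd : ∀ v, (∀ w, ω v w = 0) → v = 0)
    (X Y : Submodule F V) (hX : sympOrth ω X ≤ X) :
    ∀ v : X, (Submodule.mkQ ((sympOrth ω X).comap X.subtype) v ∈
        Submodule.map (Submodule.mkQ ((sympOrth ω X).comap X.subtype))
          ((X ⊓ sympOrth ω Y).comap X.subtype)
      ↔ ∀ u : X,
          Submodule.mkQ ((sympOrth ω X).comap X.subtype) u ∈
            Submodule.map (Submodule.mkQ ((sympOrth ω X).comap X.subtype))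
              ((X ⊓ Y).comap X.subtype) →
          ω (v : V) (u : V) = 0) := by
  intro v
  have hrefl : ω.IsRefl := LinearMap.IsAlt.isRefl halt
  rw [Submodule.mkQ_mem_map_mkQ_iff, mem_comap_subtype_sup_iff hX,
    ← sympOrth_inf hrefl hnd, mem_sympOrth_inf_iff_forall_mkQ hrefl]

/-- for coisotropic subspaces `X`, `Y` of a finite-dimensional
symplectic space `(V, ω)`, the image `L` of `X ∩ Y^⊥` in the symplectic quotient
`X/X^⊥` is the orthogonal complement of the image `K` of `X ∩ Y` with respect to
the induced symplectic form (expressed via representatives, since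
`ω̄(v̄, ū) = ω(v,u)` for `v, u ∈ X`). -/
theorem coisotropic_quotient_orth {F : Type*} [Field F]
    {V : Type*} [AddCommGroup V] [Module F V] [FiniteDimensional F V]
    (ω : V →ₗ[F] V →ₗ[F] F)
    (halt : ∀ v, ω v v = 0) (hnd : ∀ v, (∀ w, ω v w = 0) → v = 0)
    (X Y : Submodule F V) (hX : sympOrth ω X ≤ X) (hY : sympOrth ω Y ≤ Y) :
    ∀ v : X, (Submodule.mkQ ((sympOrth ω X).comap X.subtype) v ∈
        Submodule.map (Submodule.mkQ ((sympOrth ω X).comap X.subtype))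
          ((X ⊓ sympOrth ω Y).comap X.subtype)
      ↔ ∀ u : X,
          Submodule.mkQ ((sympOrth ω X).comap X.subtype) u ∈
            Submodule.map (Submodule.mkQ ((sympOrth ω X).comap X.subtype))
              ((X ⊓ Y).comap X.subtype) →
          ω (v : V) (u : V) = 0) :=
  coisotropic_quotient_orth_general ω halt hnd X Y hX
end

section
/- Let T be a Lagrangian linear relation between finite-dimensional symplectic spaces over a finite field F of odd characteristic, and W(T) ≠ 0 a bounded operator satisfying a(w)W(T) = W(T)a(v) for all (v,w) ∈ T. If a pair (β,γ) satisfies a(γ)W(T) = W(T)a(β), then (β,γ) ∈ T. -/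
/-- The Heisenberg operator `a(v)` on `ℓ²(Fⁿ)` as a linear operator. -/
noncomputable def heisOpL (F : Type*) [Field F] [Fintype F] {n : ℕ}
    (Exp : AddChar F ℂ) (v : (Fin n → F) × (Fin n → F)) :
    ((Fin n → F) → ℂ) →ₗ[ℂ] ((Fin n → F) → ℂ) where
  toFun f := fun x => Exp (∑ j, (x j * v.2 j + (2 : F)⁻¹ * (v.1 j * v.2 j))) * f (x + v.1)
  map_add' f g := by funext x; simp [mul_add]
  map_smul' c f := by funext x; simp [smul_eq_mul]; ring

/-- The standard symplectic form on `Fⁿ ⊕ Fⁿ`. -/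
def sympForm {F : Type*} [Field F] {n : ℕ}
    (v w : (Fin n → F) × (Fin n → F)) : F :=
  ∑ j, (v.1 j * w.2 j - v.2 j * w.1 j)


/-- A Lagrangian (maximal isotropic) linear relation between the standard
symplectic spaces `Fᵐ ⊕ Fᵐ` and `Fⁿ ⊕ Fⁿ`, with respect to the difference of
the standard symplectic forms. -/
def IsLagRel {F : Type*} [Field F] {m n : ℕ}
    (T : Submodule F (((Fin m → F) × (Fin m → F)) × ((Fin n → F) × (Fin n → F)))) :
    Prop :=
  (∀ p ∈ T, ∀ q ∈ T, sympForm p.1 q.1 - sympForm p.2 q.2 = 0) ∧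
  ∀ S, T ≤ S →
    (∀ p ∈ S, ∀ q ∈ S, sympForm p.1 q.1 - sympForm p.2 q.2 = 0) → S = T

/-! The Heisenberg operators satisfy `a(p) a(q) = Exp({p, q}) a(q) a(p)`, and a nonzero
intertwiner must respect these phases: for `(v, w) ∈ T`, commuting `a(γ)` past `a(w)` on one side
of `W` and `a(β)` past `a(v)` on the other gives `Exp({β, v} - {γ, w}) = 1`. Replacing `(v, w)`
by `c • (v, w)` and using that a nontrivial character of a field is primitive gives
`{β, v} = {γ, w}`; so `(β, γ)` is orthogonal to `T` and lies in `T` by maximality. -/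

theorem LinearMap.eq_of_intertwines_of_comp_eq_smul_comp {K V U : Type*} [Field K]
    [AddCommGroup V] [Module K V] [AddCommGroup U] [Module K U] {W : V →ₗ[K] U}
    {A A' : Module.End K U} {B B' : Module.End K V} {c d : K}
    (hA : A ∘ₗ W = W ∘ₗ B) (hA' : A' ∘ₗ W = W ∘ₗ B')
    (hc : A ∘ₗ A' = c • (A' ∘ₗ A)) (hd : B ∘ₗ B' = d • (B' ∘ₗ B))
    (hne : A' ∘ₗ A ∘ₗ W ≠ 0) : c = d := by
  refine smul_left_injective K hne ?_
  calc c • (A' ∘ₗ A ∘ₗ W) = A ∘ₗ A' ∘ₗ W := by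
        rw [← LinearMap.comp_assoc, ← LinearMap.smul_comp, ← hc, LinearMap.comp_assoc]
    _ = W ∘ₗ B ∘ₗ B' := by
        rw [hA', ← LinearMap.comp_assoc, hA, LinearMap.comp_assoc]
    _ = d • (A' ∘ₗ A ∘ₗ W) := by
        rw [hd, LinearMap.comp_smul, ← LinearMap.comp_assoc, ← hA', LinearMap.comp_assoc,
          ← hA]

theorem LinearMap.BilinForm.IsAlt.mem_of_forall_apply_eq_zero {K V : Type*} [CommRing K]
    [AddCommGroup V] [Module K V] {B : LinearMap.BilinForm K V} (hB : B.IsAlt)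
    {T : Submodule K V} (hT : ∀ p ∈ T, ∀ q ∈ T, B p q = 0)
    (hmax : ∀ S, T ≤ S → (∀ p ∈ S, ∀ q ∈ S, B p q = 0) → S = T)
    {x : V} (hx : ∀ p ∈ T, B x p = 0) : x ∈ T := by
  have hiso : ∀ p ∈ T ⊔ K ∙ x, ∀ q ∈ T ⊔ K ∙ x, B p q = 0 := by
    intro p hp q hq
    obtain ⟨y, hy, _, hz, rfl⟩ := Submodule.mem_sup.1 hp
    obtain ⟨a, rfl⟩ := Submodule.mem_span_singleton.1 hz
    obtain ⟨y', hy', _, hz', rfl⟩ := Submodule.mem_sup.1 hq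
    obtain ⟨a', rfl⟩ := Submodule.mem_span_singleton.1 hz'
    simp [hT y hy y' hy', hx y hy, hx y' hy', hB.self_eq_zero, ← hB.neg_eq x y]
  rw [← hmax _ le_sup_left hiso]
  exact Submodule.mem_sup_right (Submodule.mem_span_singleton_self x)

section Symplectic

variable {F : Type*} [Field F]

theorem sympForm_self {k : ℕ} (p : (Fin k → F) × (Fin k → F)) : sympForm p p = 0 :=
  Finset.sum_eq_zero fun _ _ => by ring

theorem sympForm_eq_dotProduct {k : ℕ} (v w : (Fin k → F) × (Fin k → F)) :
    sympForm v w = dotProduct v.1 w.2 - dotProduct v.2 w.1 := by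
  simp [sympForm, dotProduct]

variable (F)

def sympFormBilin (k : ℕ) : LinearMap.BilinForm F ((Fin k → F) × (Fin k → F)) :=
  LinearMap.mk₂ F sympForm
    (fun _ _ _ => by
      simp only [sympForm_eq_dotProduct, Prod.fst_add, Prod.snd_add, add_dotProduct]; ring)
    (fun _ _ _ => by
      simp only [sympForm_eq_dotProduct, Prod.smul_fst, Prod.smul_snd, smul_dotProduct,
        smul_eq_mul]; ring)
    (fun _ _ _ => by
      simp only [sympForm_eq_dotProduct, Prod.fst_add, Prod.snd_add, dotProduct_add]; ring)
    (fun _ _ _ => by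
      simp only [sympForm_eq_dotProduct, Prod.smul_fst, Prod.smul_snd, dotProduct_smul,
        smul_eq_mul]; ring)

def sympFormDiff (m n : ℕ) :
    LinearMap.BilinForm F (((Fin m → F) × (Fin m → F)) × ((Fin n → F) × (Fin n → F))) :=
  (sympFormBilin F m).compl₁₂ (LinearMap.fst F _ _) (LinearMap.fst F _ _) -
    (sympFormBilin F n).compl₁₂ (LinearMap.snd F _ _) (LinearMap.snd F _ _)

variable {F} {m n : ℕ}

theorem sympFormDiff_apply
    (x y : ((Fin m → F) × (Fin m → F)) × ((Fin n → F) × (Fin n → F))) :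
    sympFormDiff F m n x y = sympForm x.1 y.1 - sympForm x.2 y.2 := rfl

theorem sympFormDiff_isAlt : (sympFormDiff F m n).IsAlt := fun x => by
  simp [sympFormDiff_apply, sympForm_self]

theorem IsLagRel.mem_of_forall_sympFormDiff_eq_zero
    {T : Submodule F (((Fin m → F) × (Fin m → F)) × ((Fin n → F) × (Fin n → F)))}
    (hT : IsLagRel T) {x : ((Fin m → F) × (Fin m → F)) × ((Fin n → F) × (Fin n → F))}
    (hx : ∀ p ∈ T, sympFormDiff F m n x p = 0) : x ∈ T :=
  sympFormDiff_isAlt.mem_of_forall_apply_eq_zero hT.1 hT.2 hx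

end Symplectic

section Heisenberg

variable {F : Type*} [Field F] [Fintype F] (Exp : AddChar F ℂ) {k : ℕ}

theorem heisOpL_apply (v : (Fin k → F) × (Fin k → F)) (f : (Fin k → F) → ℂ)
    (x : Fin k → F) :
    heisOpL F Exp v f x
      = Exp (∑ j, (x j * v.2 j + (2 : F)⁻¹ * (v.1 j * v.2 j))) * f (x + v.1) := rfl

theorem heisOpL_injective (v : (Fin k → F) × (Fin k → F)) :
    Function.Injective (heisOpL F Exp v) := by
  intro f g hfg
  funext y
  have := congrFun hfg (y - v.1)
  simp only [heisOpL_apply, sub_add_cancel] at this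
  exact mul_left_cancel₀ (Exp.val_isUnit _).ne_zero this

theorem heisOpL_comp_heisOpL (p q : (Fin k → F) × (Fin k → F)) :
    heisOpL F Exp p ∘ₗ heisOpL F Exp q
      = Exp (sympForm p q) • (heisOpL F Exp q ∘ₗ heisOpL F Exp p) := by
  ext f x
  simp only [LinearMap.comp_apply, LinearMap.smul_apply, Pi.smul_apply, smul_eq_mul,
    heisOpL_apply, add_right_comm x q.1 p.1, ← mul_assoc, ← AddChar.map_add_eq_mul]
  congr 2
  simp only [sympForm, Pi.add_apply, ← Finset.sum_add_distrib]
  exact Finset.sum_congr rfl fun _ _ => by ring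

theorem exp_sympFormDiff_eq_one_of_intertwines {m n : ℕ}
    {W : ((Fin m → F) → ℂ) →ₗ[ℂ] ((Fin n → F) → ℂ)} (hW : W ≠ 0)
    {x p : ((Fin m → F) × (Fin m → F)) × ((Fin n → F) × (Fin n → F))}
    (hx : heisOpL F Exp x.2 ∘ₗ W = W ∘ₗ heisOpL F Exp x.1)
    (hp : heisOpL F Exp p.2 ∘ₗ W = W ∘ₗ heisOpL F Exp p.1) :
    Exp (sympFormDiff F m n x p) = 1 := by
  have hne : heisOpL F Exp p.2 ∘ₗ heisOpL F Exp x.2 ∘ₗ W ≠ 0 := fun h => hW <| by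
    ext f : 1
    apply heisOpL_injective Exp x.2
    apply heisOpL_injective Exp p.2
    simpa using LinearMap.congr_fun h f
  have hphase := LinearMap.eq_of_intertwines_of_comp_eq_smul_comp hx hp
    (heisOpL_comp_heisOpL Exp _ _) (heisOpL_comp_heisOpL Exp _ _) hne
  rw [sympFormDiff_apply, AddChar.map_sub_eq_div, hphase, div_self (Exp.val_isUnit _).ne_zero]

end Heisenberg

theorem weil_intertwiner_pair_mem_general {F : Type*} [Field F] [Fintype F]
    (Exp : AddChar F ℂ) (hExp : Exp ≠ 1) {m n : ℕ}
    (T : Submodule F (((Fin m → F) × (Fin m → F)) × ((Fin n → F) × (Fin n → F))))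
    (hT : IsLagRel T)
    (WT : ((Fin m → F) → ℂ) →ₗ[ℂ] ((Fin n → F) → ℂ)) (hWT0 : WT ≠ 0)
    (hTint : ∀ p ∈ T, heisOpL F Exp p.2 ∘ₗ WT = WT ∘ₗ heisOpL F Exp p.1)
    (β : (Fin m → F) × (Fin m → F)) (γ : (Fin n → F) × (Fin n → F))
    (hβγ : heisOpL F Exp γ ∘ₗ WT = WT ∘ₗ heisOpL F Exp β) :
    (β, γ) ∈ T := by
  refine hT.mem_of_forall_sympFormDiff_eq_zero fun p hp => ?_
  by_contra hne
  refine AddChar.IsPrimitive.of_ne_one hExp hne (DFunLike.ext _ _ fun c => ?_)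
  have hc := exp_sympFormDiff_eq_one_of_intertwines Exp hWT0 (x := (β, γ)) hβγ
    (hTint _ (T.smul_mem c hp))
  simpa [mul_comm] using hc

/-- if `W(T) ≠ 0` intertwines along a Lagrangian relation `T` and
a pair `(β,γ)` satisfies `a(γ)W(T) = W(T)a(β)`, then `(β,γ) ∈ T`. -/
theorem weil_intertwiner_pair_mem {F : Type*} [Field F] [Fintype F]
    (hp : ringChar F ≠ 2) (Exp : AddChar F ℂ) (hExp : Exp ≠ 1) {m n : ℕ}
    (T : Submodule F (((Fin m → F) × (Fin m → F)) × ((Fin n → F) × (Fin n → F))))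
    (hT : IsLagRel T)
    (WT : ((Fin m → F) → ℂ) →ₗ[ℂ] ((Fin n → F) → ℂ)) (hWT0 : WT ≠ 0)
    (hTint : ∀ p ∈ T, heisOpL F Exp p.2 ∘ₗ WT = WT ∘ₗ heisOpL F Exp p.1)
    (β : (Fin m → F) × (Fin m → F)) (γ : (Fin n → F) × (Fin n → F))
    (hβγ : heisOpL F Exp γ ∘ₗ WT = WT ∘ₗ heisOpL F Exp β) :
    (β, γ) ∈ T :=
  weil_intertwiner_pair_mem_general Exp hExp T hT WT hWT0 hTint β γ hβγ
end
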